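/- arXiv:1607.04758 — 5 statements merged into one kernel-verified Lean document; each statement's English description precedes it below -/
import Mathlib

section
/- For every quintuple of elements F₁, F₂, F₃, F₄, F₅ of the Lie algebra sl(2, ℂ), the following identity holds: [F₁, [[F₂,F₃],[F₄,F₅]]] + [F₃, [[F₂,F₅],[F₄,F₁]]] + [F₅, [[F₂,F₁],[F₄,F₃]]] = 0. -/
private lemma fin2_sub (a b c d e f g h : ℂ) :
    !![a,b;c,d] - !![e,f;g,h] = !![a-e,b-f;c-g,d-h] := by
  ext i j; fin_cases i <;> fin_cases j <;> simp

private lemma fin2_add (a b c d e f g h : ℂ) :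
    !![a,b;c,d] + !![e,f;g,h] = !![a+e,b+f;c+g,d+h] := by
  ext i j; fin_cases i <;> fin_cases j <;> simp

private lemma fin2_eq_zero (a b c d : ℂ) (h1 : a = 0) (h2 : b = 0) (h3 : c = 0)
    (h4 : d = 0) : !![a,b;c,d] = 0 := by
  subst h1 h2 h3 h4
  ext i j; fin_cases i <;> fin_cases j <;> simp

set_option maxHeartbeats 1000000 in
open Matrix in
private lemma tomihisa_matrix (A B C D E : Matrix (Fin 2) (Fin 2) ℂ)
    (hA : A.trace = 0) (hB : B.trace = 0) (hC : C.trace = 0)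
    (hD : D.trace = 0) (hE : E.trace = 0) :
    ⁅A, ⁅⁅B, C⁆, ⁅D, E⁆⁆⁆ + ⁅C, ⁅⁅B, E⁆, ⁅D, A⁆⁆⁆ +
      ⁅E, ⁅⁅B, A⁆, ⁅D, C⁆⁆⁆ = 0 := by
  simp only [Matrix.trace_fin_two] at hA hB hC hD hE
  have hA' : A 1 1 = -A 0 0 := by linear_combination hA
  have hB' : B 1 1 = -B 0 0 := by linear_combination hB
  have hC' : C 1 1 = -C 0 0 := by linear_combination hC
  have hD' : D 1 1 = -D 0 0 := by linear_combination hD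
  have hE' : E 1 1 = -E 0 0 := by linear_combination hE
  rw [Matrix.eta_fin_two A, Matrix.eta_fin_two B, Matrix.eta_fin_two C,
    Matrix.eta_fin_two D, Matrix.eta_fin_two E, hA', hB', hC', hD', hE']
  simp only [Ring.lie_def, sub_eq_add_neg, Matrix.mul_fin_two, fin2_add, fin2_sub]
  simp only [← sub_eq_add_neg, fin2_sub, Matrix.mul_fin_two, fin2_add]
  exact fin2_eq_zero _ _ _ _ (by ring) (by ring) (by ring) (by ring)

/-- Tomihisa's identity in `sl(2, ℂ)`: for every quintuple of trace-zero `2×2` complex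
matrices, `[F₁,[[F₂,F₃],[F₄,F₅]]] + [F₃,[[F₂,F₅],[F₄,F₁]]] + [F₅,[[F₂,F₁],[F₄,F₃]]] = 0`. -/
theorem tomihisa_sl2_complex
    (F₁ F₂ F₃ F₄ F₅ : LieAlgebra.SpecialLinear.sl (Fin 2) ℂ) :
    ⁅F₁, ⁅⁅F₂, F₃⁆, ⁅F₄, F₅⁆⁆⁆ + ⁅F₃, ⁅⁅F₂, F₅⁆, ⁅F₄, F₁⁆⁆⁆ +
      ⁅F₅, ⁅⁅F₂, F₁⁆, ⁅F₄, F₃⁆⁆⁆ = 0 := by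
  have h : ∀ F : LieAlgebra.SpecialLinear.sl (Fin 2) ℂ, (F : Matrix (Fin 2) (Fin 2) ℂ).trace = 0 :=
    fun F => F.2
  apply Subtype.ext
  push_cast
  exact tomihisa_matrix _ _ _ _ _ (h F₁) (h F₂) (h F₃) (h F₄) (h F₅)
end

section
/- For every quintuple of elements F₁, F₂, F₃, F₄, F₅ of the Lie algebra sl(2, ℝ), the identity [F₁, [[F₂,F₃],[F₄,F₅]]] + [F₃, [[F₂,F₅],[F₄,F₁]]] + [F₅, [[F₂,F₁],[F₄,F₃]]] = 0 holds. -/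
set_option maxHeartbeats 2000000 in
lemma tomihisa_matrix_aux (a₁ b₁ c₁ a₂ b₂ c₂ a₃ b₃ c₃ a₄ b₄ c₄ a₅ b₅ c₅ : ℝ) :
    (fun A B C D E : Matrix (Fin 2) (Fin 2) ℝ =>
      ⁅A, ⁅⁅B, C⁆, ⁅D, E⁆⁆⁆ + ⁅C, ⁅⁅B, E⁆, ⁅D, A⁆⁆⁆ + ⁅E, ⁅⁅B, A⁆, ⁅D, C⁆⁆⁆)
      !![a₁, b₁; c₁, -a₁] !![a₂, b₂; c₂, -a₂] !![a₃, b₃; c₃, -a₃]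
      !![a₄, b₄; c₄, -a₄] !![a₅, b₅; c₅, -a₅] = 0 := by
  simp only [Ring.lie_def]
  ext i j
  fin_cases i <;> fin_cases j <;>
    · simp [Matrix.mul_apply, Fin.sum_univ_two]
      ring

/-- Tomihisa's identity in `sl(2, ℝ)`: for every quintuple of trace-zero `2×2` real
matrices, `[F₁,[[F₂,F₃],[F₄,F₅]]] + [F₃,[[F₂,F₅],[F₄,F₁]]] + [F₅,[[F₂,F₁],[F₄,F₃]]] = 0`. -/
theorem tomihisa_sl2_real
    (F₁ F₂ F₃ F₄ F₅ : LieAlgebra.SpecialLinear.sl (Fin 2) ℝ) :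
    ⁅F₁, ⁅⁅F₂, F₃⁆, ⁅F₄, F₅⁆⁆⁆ + ⁅F₃, ⁅⁅F₂, F₅⁆, ⁅F₄, F₁⁆⁆⁆ +
      ⁅F₅, ⁅⁅F₂, F₁⁆, ⁅F₄, F₃⁆⁆⁆ = 0 := by
  have key : ∀ F : LieAlgebra.SpecialLinear.sl (Fin 2) ℝ,
      (F : Matrix (Fin 2) (Fin 2) ℝ) =
        !![(F : Matrix (Fin 2) (Fin 2) ℝ) 0 0, (F : Matrix (Fin 2) (Fin 2) ℝ) 0 1;
           (F : Matrix (Fin 2) (Fin 2) ℝ) 1 0, -(F : Matrix (Fin 2) (Fin 2) ℝ) 0 0] := by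
    intro F
    have h : Matrix.trace (F : Matrix (Fin 2) (Fin 2) ℝ) = 0 := F.2
    simp [Matrix.trace, Fin.sum_univ_two] at h
    ext i j
    fin_cases i <;> fin_cases j <;> simp <;> linarith
  apply Subtype.ext
  push_cast [LieSubalgebra.coe_bracket]
  rw [key F₁, key F₂, key F₃, key F₄, key F₅]
  exact tomihisa_matrix_aux _ _ _ _ _ _ _ _ _ _ _ _ _ _ _
end

section
/- The Poisson bracket (Jacobian) of two binary quadratic forms f₁ = a₁x² + 2b₁xy + c₁y² and f₂ = a₂x² + 2b₂xy + c₂y², defined as {f₁,f₂} = (∂f₁/∂x)(∂f₂/∂y) − (∂f₁/∂y)(∂f₂/∂x) (up to a scalar factor, equal to (a₁b₂ − a₂b₁)x² + (a₁c₂ − a₂c₁)xy + (b₁c₂ − b₂c₁)y²), is orthogonal to both f₁ and f₂ with respect to the bilinear form of the discriminant Δ = ac − b². -/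
/-- The pairing `a₁c₂ - 2b₁b₂ + a₂c₁` of two binary quadratic forms `aᵢx² + 2bᵢxy + cᵢy²`
(represented by coefficient triples `(a, b, c)`), i.e. the bilinear form associated to the
discriminant `Δ(ax² + 2bxy + cy²) = ac - b²` (up to a factor of `-2`). -/
def discPairing (f g : ℂ × ℂ × ℂ) : ℂ :=
  f.1 * g.2.2 - 2 * f.2.1 * g.2.1 + g.1 * f.2.2

/-- The Poisson bracket (Jacobian) of two binary quadratic forms `aᵢx² + 2bᵢxy + cᵢy²`,
up to a scalar factor: `(a₁b₂ - a₂b₁)x² + (a₁c₂ - a₂c₁)xy + (b₁c₂ - b₂c₁)y²`, written as a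
coefficient triple `(A, B, C)` with middle coefficient `2B = a₁c₂ - a₂c₁`. -/
noncomputable def poissonBracket (f g : ℂ × ℂ × ℂ) : ℂ × ℂ × ℂ :=
  (f.1 * g.2.1 - g.1 * f.2.1, (f.1 * g.2.2 - g.1 * f.2.2) / 2, f.2.1 * g.2.2 - g.2.1 * f.2.2)

/-- The Poisson bracket of two binary quadratic forms is orthogonal to both of them with
respect to the bilinear form of the discriminant: the bracket represents the common
perpendicular (skewer) of the two corresponding lines in hyperbolic 3-space. -/
theorem poissonBracket_disc_orthogonal (f g : ℂ × ℂ × ℂ) :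
    discPairing (poissonBracket f g) f = 0 ∧ discPairing (poissonBracket f g) g = 0 := by
  unfold discPairing poissonBracket; constructor <;> ring
end

section
/- The Desargues theorem holds in the projective plane over a field: if two triangles A₁A₂A₃ and B₁B₂B₃ are in general position and the three lines A₁B₁, A₂B₂, A₃B₃ are concurrent, then the three points C₃ = (A₁A₂) ∩ (B₁B₂), C₁ = (A₂A₃) ∩ (B₂B₃), and C₂ = (A₁A₃) ∩ (B₁B₃) are collinear. -/
open Matrix

/-! The determinant of the three points `Cᵢ` factors as the product of the determinants of the
two triangles and of the three lines `AᵢBᵢ`, a polynomial identity in the coordinates. Concurrency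
of the lines makes the last factor vanish, hence the `Cᵢ` are linearly dependent. -/

theorem det_side_intersections_eq {R : Type*} [CommRing R] (A₁ A₂ A₃ B₁ B₂ B₃ : Fin 3 → R) :
    det (of ![(A₂ ⨯₃ A₃) ⨯₃ (B₂ ⨯₃ B₃), (A₁ ⨯₃ A₃) ⨯₃ (B₁ ⨯₃ B₃), (A₁ ⨯₃ A₂) ⨯₃ (B₁ ⨯₃ B₂)]) =
      det (of ![A₁, A₂, A₃]) * det (of ![B₁, B₂, B₃]) *
        det (of ![A₁ ⨯₃ B₁, A₂ ⨯₃ B₂, A₃ ⨯₃ B₃]) := by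
  simp only [det_fin_three, cross_apply, of_apply, cons_val_zero, cons_val_one, cons_val_two,
    head_cons, tail_cons]
  ring

theorem not_linearIndependent_of_det_eq_zero {K m : Type*} [Field K] [Fintype m] [DecidableEq m]
    {v : m → m → K} (hv : (of v).det = 0) : ¬ LinearIndependent K v := fun h ↦
  ((isUnit_iff_isUnit_det _).mp (linearIndependent_rows_iff_isUnit.mp h)).ne_zero hv

theorem desargues_projective_plane_general {k : Type*} [Field k]
    (A₁ A₂ A₃ B₁ B₂ B₃ : Fin 3 → k)
    -- the lines A₁B₁, A₂B₂, A₃B₃ are concurrent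
    (hconc : ¬ LinearIndependent k ![crossProduct A₁ B₁, crossProduct A₂ B₂, crossProduct A₃ B₃])
    (C₁ C₂ C₃ : Fin 3 → k)
    (hC₃ : C₃ = crossProduct (crossProduct A₁ A₂) (crossProduct B₁ B₂))
    (hC₁ : C₁ = crossProduct (crossProduct A₂ A₃) (crossProduct B₂ B₃))
    (hC₂ : C₂ = crossProduct (crossProduct A₁ A₃) (crossProduct B₁ B₃)) :
    ¬ LinearIndependent k ![C₁, C₂, C₃] := by
  subst hC₁ hC₂ hC₃
  have hlines : det (of ![A₁ ⨯₃ B₁, A₂ ⨯₃ B₂, A₃ ⨯₃ B₃]) = 0 :=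
    det_eq_zero_of_not_linearIndependent_rows hconc
  exact not_linearIndependent_of_det_eq_zero
    ((det_side_intersections_eq ..).trans (by rw [hlines, mul_zero]))

/-- The Desargues theorem in the projective plane over a field `k`, with points represented by
nonzero vectors of `k³` up to scalar.  If the triangles `A₁A₂A₃` and `B₁B₂B₃` are in general
position and the lines `A₁B₁`, `A₂B₂`, `A₃B₃` (given by cross products) are concurrent, then
the points `C₃ = (A₁A₂) ∩ (B₁B₂)`, `C₁ = (A₂A₃) ∩ (B₂B₃)`, `C₂ = (A₁A₃) ∩ (B₁B₃)` are
collinear. -/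
theorem desargues_projective_plane {k : Type*} [Field k]
    (A₁ A₂ A₃ B₁ B₂ B₃ : Fin 3 → k)
    -- general position: nondegenerate triangles
    (hA : LinearIndependent k ![A₁, A₂, A₃])
    (hB : LinearIndependent k ![B₁, B₂, B₃])
    -- the lines AᵢBᵢ are well defined
    (h₁ : crossProduct A₁ B₁ ≠ 0) (h₂ : crossProduct A₂ B₂ ≠ 0) (h₃ : crossProduct A₃ B₃ ≠ 0)
    -- the lines A₁B₁, A₂B₂, A₃B₃ are concurrent
    (hconc : ¬ LinearIndependent k ![crossProduct A₁ B₁, crossProduct A₂ B₂, crossProduct A₃ B₃])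
    (C₁ C₂ C₃ : Fin 3 → k)
    (hC₃ : C₃ = crossProduct (crossProduct A₁ A₂) (crossProduct B₁ B₂))
    (hC₁ : C₁ = crossProduct (crossProduct A₂ A₃) (crossProduct B₂ B₃))
    (hC₂ : C₂ = crossProduct (crossProduct A₁ A₃) (crossProduct B₁ B₃))
    (hC₁0 : C₁ ≠ 0) (hC₂0 : C₂ ≠ 0) (hC₃0 : C₃ ≠ 0) :
    ¬ LinearIndependent k ![C₁, C₂, C₃] :=
  desargues_projective_plane_general A₁ A₂ A₃ B₁ B₂ B₃ hconc C₁ C₂ C₃ hC₃ hC₁ hC₂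
end

section
/- Ivory's lemma for confocal ellipses: let γ: x²/a² + y²/b² = 1 and Γ: x²/(a²+λ) + y²/(b²+λ) = 1 (with λ > 0) be confocal ellipses, and let A be the diagonal linear map A(x,y) = (x·√(a²+λ)/a, y·√(b²+λ)/b), which maps γ onto Γ. Then for every point P ∈ γ, the points P and A(P) lie on a common conic of the confocal family, namely a confocal hyperbola x²/(a²+μ) + y²/(b²+μ) = 1 with −a² < μ < −b² (when P is not on a coordinate axis). -/
/-- Ivory's lemma for confocal ellipses.  Let `γ : x²/a² + y²/b² = 1` and
`Γ : x²/(a²+λ) + y²/(b²+λ) = 1` (with `λ > 0`) be confocal ellipses, and let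
`A(x,y) = (x·√(a²+λ)/a, y·√(b²+λ)/b)` be the diagonal linear map taking `γ` onto `Γ`.
Then every point `P = (x,y)` of `γ` not on a coordinate axis lies with `A(P)` on a common
confocal hyperbola `x²/(a²+μ) + y²/(b²+μ) = 1`, `-a² < μ < -b²`. -/
theorem ivory_lemma (a b lam x y : ℝ) (hb : 0 < b) (hab : b < a) (hlam : 0 < lam)
    (hP : x ^ 2 / a ^ 2 + y ^ 2 / b ^ 2 = 1) (hx : x ≠ 0) (hy : y ≠ 0) :
    ∃ mu : ℝ, -a ^ 2 < mu ∧ mu < -b ^ 2 ∧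
      x ^ 2 / (a ^ 2 + mu) + y ^ 2 / (b ^ 2 + mu) = 1 ∧
      (x * Real.sqrt (a ^ 2 + lam) / a) ^ 2 / (a ^ 2 + mu) +
        (y * Real.sqrt (b ^ 2 + lam) / b) ^ 2 / (b ^ 2 + mu) = 1 := by
  have ha : 0 < a := hb.trans hab
  have ha2 : a ^ 2 ≠ 0 := by positivity
  have hb2 : b ^ 2 ≠ 0 := by positivity
  have hx2 : 0 < x ^ 2 := by positivity
  have hy2 : 0 < y ^ 2 := by positivity
  -- the constraint in polynomial form
  have hC : b ^ 2 * x ^ 2 + a ^ 2 * y ^ 2 = a ^ 2 * b ^ 2 := by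
    field_simp at hP; linarith
  have hlow : b ^ 2 < x ^ 2 + y ^ 2 := by
    nlinarith [mul_pos (pow_pos hb 2) hx2, mul_pos hx2 (sub_pos.2 (by nlinarith : b ^ 2 < a ^ 2))]
  have hhigh : x ^ 2 + y ^ 2 < a ^ 2 := by
    nlinarith [mul_pos (pow_pos ha 2) hy2, mul_pos hy2 (sub_pos.2 (by nlinarith : b ^ 2 < a ^ 2))]
  have h1 : a ^ 2 + (x ^ 2 + y ^ 2 - a ^ 2 - b ^ 2) ≠ 0 := by intro h; nlinarith
  have h2 : b ^ 2 + (x ^ 2 + y ^ 2 - a ^ 2 - b ^ 2) ≠ 0 := by intro h; nlinarith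
  have h1' : x ^ 2 + y ^ 2 - b ^ 2 ≠ 0 := by intro h; nlinarith
  have h2' : x ^ 2 + y ^ 2 - a ^ 2 ≠ 0 := by intro h; nlinarith
  have e1 : a ^ 2 + (x ^ 2 + y ^ 2 - a ^ 2 - b ^ 2) = x ^ 2 + y ^ 2 - b ^ 2 := by ring
  have e2 : b ^ 2 + (x ^ 2 + y ^ 2 - a ^ 2 - b ^ 2) = x ^ 2 + y ^ 2 - a ^ 2 := by ring
  refine ⟨x ^ 2 + y ^ 2 - a ^ 2 - b ^ 2, by linarith, by linarith, ?_, ?_⟩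
  · rw [e1, e2]
    field_simp
    linear_combination hC
  · have hsa : Real.sqrt (a ^ 2 + lam) ^ 2 = a ^ 2 + lam :=
      Real.sq_sqrt (by positivity)
    have hsb : Real.sqrt (b ^ 2 + lam) ^ 2 = b ^ 2 + lam :=
      Real.sq_sqrt (by positivity)
    have ha' : a ≠ 0 := ne_of_gt ha
    have hb' : b ≠ 0 := ne_of_gt hb
    rw [e1, e2, div_pow, div_pow, mul_pow, mul_pow, hsa, hsb]
    field_simp
    linear_combination (lam * (x ^ 2 + y ^ 2) + a ^ 2 * b ^ 2) * hC
end
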